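/- arXiv:2211.13048 — 4 statements merged into one kernel-verified Lean document; each statement's English description precedes it below -/
import Mathlib

section
/- Let B ⊆ ℕ have positive lower density, let h : ℕ → ℝ be increasing, and let δ > 0. Then there exists B' ⊆ B with positive lower density such that the set h(B') ∩ ℕ has upper density less than δ. -/
open Filter Set
open scoped Classical

noncomputable def lowerDensity (A : Set ℕ) : ℝ :=
  liminf (fun N : ℕ => (((Finset.Icc 1 N).filter (fun n => n ∈ A)).card : ℝ) / N) atTop

noncomputable def upperDensity (A : Set ℕ) : ℝ :=
  limsup (fun N : ℕ => (((Finset.Icc 1 N).filter (fun n => n ∈ A)).card : ℝ) / N) atTop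

/-!
Let `T ⊆ B` be the set of `b` with `h b ∈ ℕ`, and take `B' = (B \ T) ∪ {every q-th element of T}`
with `q > 1 / δ`. Thinning `T` this way loses at most a factor `q + 1` in counting, so `B'` keeps
positive lower density. On `T`, `h` is an increasing map onto the natural numbers it hits, so the
natural values of `h` on `B'` are every `q`-th element of some `S ⊆ ℕ`; as the `k`-th element of
`S` is at least `k`, at most `(N + q) / q` of them lie below `N`, which gives upper density
`≤ 1 / q < δ`.
-/

theorem count_le_count_add_count {A C D : Set ℕ} [DecidablePred (· ∈ A)] [DecidablePred (· ∈ C)]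
    [DecidablePred (· ∈ D)] (hA : A ⊆ C ∪ D) (N : ℕ) :
    Nat.count (· ∈ A) N ≤ Nat.count (· ∈ C) N + Nat.count (· ∈ D) N := by
  simp only [Nat.count_eq_card_filter_range]
  refine (Finset.card_le_card fun n hn => ?_).trans (Finset.card_union_le _ _)
  simp only [Finset.mem_union, Finset.mem_filter] at hn ⊢
  rcases hA hn.2 with h | h <;> simp [hn.1, h]

theorem card_filter_Icc_le_count_succ (A : Set ℕ) (N : ℕ) :
    ((Finset.Icc 1 N).filter (· ∈ A)).card ≤ Nat.count (· ∈ A) (N + 1) := by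
  rw [Nat.count_eq_card_filter_range]
  refine Finset.card_le_card (Finset.filter_subset_filter _ fun n hn => ?_)
  simp only [Finset.mem_Icc, Finset.mem_range] at hn ⊢
  omega

theorem count_succ_le_card_filter_Icc_add_one (A : Set ℕ) (N : ℕ) :
    Nat.count (· ∈ A) (N + 1) ≤ ((Finset.Icc 1 N).filter (· ∈ A)).card + 1 := by
  rw [Nat.count_eq_card_filter_range]
  refine (Finset.card_le_card fun n hn => ?_).trans (Finset.card_insert_le 0 _)
  simp only [Finset.mem_filter, Finset.mem_range, Finset.mem_insert, Finset.mem_Icc] at hn ⊢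
  rcases Nat.eq_zero_or_pos n with rfl | hn0
  · exact Or.inl rfl
  · exact Or.inr ⟨⟨hn0, by omega⟩, hn.2⟩

-- `Nat.count (· ∈ T) b` is the index of `b ∈ T` in the increasing enumeration of `T`.
def everyNth (q : ℕ) (T : Set ℕ) : Set ℕ := {b ∈ T | q ∣ Nat.count (· ∈ T) b}

section EveryNth

variable {q : ℕ} (T : Set ℕ)

theorem count_everyNth (hq : 0 < q) (N : ℕ) :
    Nat.count (· ∈ everyNth q T) N = (Nat.count (· ∈ T) N + q - 1) / q := by
  induction N with
  | zero => simp [Nat.div_eq_of_lt (Nat.sub_lt hq one_pos)]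
  | succ N ih =>
    rw [Nat.count_succ, Nat.count_succ, ih]
    by_cases hN : N ∈ T
    · have hk : Nat.count (· ∈ T) N + 1 + q - 1 = Nat.count (· ∈ T) N + q - 1 + 1 := by omega
      have hdvd : q ∣ Nat.count (· ∈ T) N + q - 1 + 1 ↔ q ∣ Nat.count (· ∈ T) N := by
        rw [Nat.sub_add_cancel (by omega), Nat.dvd_add_self_right]
      simp only [everyNth, mem_ofPred_eq, hN, true_and, if_true, hk, Nat.succ_div, hdvd]
    · simp [everyNth, hN]

theorem count_le_mul_count_everyNth (hq : 0 < q) (N : ℕ) :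
    Nat.count (· ∈ T) N ≤ q * Nat.count (· ∈ everyNth q T) N := by
  rw [count_everyNth T hq]
  have := Nat.div_add_mod (Nat.count (· ∈ T) N + q - 1) q
  have := Nat.mod_lt (Nat.count (· ∈ T) N + q - 1) hq
  omega

theorem mul_count_everyNth_le (hq : 0 < q) (N : ℕ) :
    q * Nat.count (· ∈ everyNth q T) N ≤ N + q := by
  rw [count_everyNth T hq]
  have := Nat.div_add_mod (Nat.count (· ∈ T) N + q - 1) q
  have : Nat.count (· ∈ T) N ≤ N := Nat.count_le _
  omega

theorem count_le_mul_count_of_diff_subset_of_everyNth_subset {B B' : Set ℕ} (hq : 0 < q)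
    (hdiff : B \ T ⊆ B') (hthin : everyNth q T ⊆ B') (N : ℕ) :
    Nat.count (· ∈ B) N ≤ (q + 1) * Nat.count (· ∈ B') N := by
  have hB : Nat.count (· ∈ B) N ≤ Nat.count (· ∈ B \ T) N + Nat.count (· ∈ T) N :=
    count_le_count_add_count (by simp) N
  have hdiff' : Nat.count (· ∈ B \ T) N ≤ Nat.count (· ∈ B') N :=
    Nat.count_mono_left fun _ _ h => hdiff h
  have hthin' : q * Nat.count (· ∈ everyNth q T) N ≤ q * Nat.count (· ∈ B') N :=
    Nat.mul_le_mul_left q (Nat.count_mono_left fun _ _ h => hthin h)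
  have := count_le_mul_count_everyNth T hq N
  linarith

theorem count_image_apply {e : ℕ → ℕ} {T : Set ℕ} (he : StrictMonoOn e T) {b : ℕ} (hb : b ∈ T) :
    Nat.count (· ∈ e '' T) (e b) = Nat.count (· ∈ T) b := by
  have himage : (Finset.range (e b)).filter (· ∈ e '' T) =
      ((Finset.range b).filter (· ∈ T)).image e := by
    ext m
    simp only [Finset.mem_filter, Finset.mem_range, Finset.mem_image]
    constructor
    · rintro ⟨hm, c, hc, rfl⟩
      exact ⟨c, ⟨(he.lt_iff_lt hc hb).1 hm, hc⟩, rfl⟩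
    · rintro ⟨c, ⟨hcb, hc⟩, rfl⟩
      exact ⟨he hc hb hcb, c, hc, rfl⟩
  rw [Nat.count_eq_card_filter_range, Nat.count_eq_card_filter_range, himage,
    Finset.card_image_of_injOn (he.injOn.mono fun c hc => (Finset.mem_filter.1 hc).2)]

theorem image_everyNth {e : ℕ → ℕ} {T : Set ℕ} (he : StrictMonoOn e T) (q : ℕ) :
    e '' everyNth q T = everyNth q (e '' T) := by
  ext n
  constructor
  · rintro ⟨b, ⟨hb, hd⟩, rfl⟩
    exact ⟨mem_image_of_mem e hb, by rwa [count_image_apply he hb]⟩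
  · rintro ⟨⟨b, hb, rfl⟩, hd⟩
    exact ⟨b, ⟨hb, by rwa [← count_image_apply he hb]⟩, rfl⟩

end EveryNth

theorem natValues_union_everyNth_eq {h : ℕ → ℝ} (hh : StrictMono h) {C T : Set ℕ}
    (hC : ∀ b ∈ C, h b ∉ range ((↑) : ℕ → ℝ)) (hT : T ⊆ h ⁻¹' range ((↑) : ℕ → ℝ)) (q : ℕ) :
    {n : ℕ | ∃ b ∈ C ∪ everyNth q T, h b = n} = everyNth q ((fun b => ⌊h b⌋₊) '' T) := by
  have hfloor : ∀ b ∈ T, h b = ⌊h b⌋₊ := fun b hb => by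
    obtain ⟨n, hn⟩ := hT hb
    rw [← hn, Nat.floor_natCast]
  have hmono : StrictMonoOn (fun b => ⌊h b⌋₊) T := fun b hb c hc hbc => by
    have := hh hbc
    rwa [hfloor b hb, hfloor c hc, Nat.cast_lt] at this
  rw [← image_everyNth hmono]
  ext n
  constructor
  · rintro ⟨b, hb | hb, hbn⟩
    · exact absurd ⟨n, hbn.symm⟩ (hC b hb)
    · exact ⟨b, hb, by simp [hbn]⟩
  · rintro ⟨b, hb, rfl⟩
    exact ⟨b, Or.inr hb, hfloor b hb.1⟩

noncomputable def partialDensity (A : Set ℕ) (N : ℕ) : ℝ :=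
  (((Finset.Icc 1 N).filter (fun n => n ∈ A)).card : ℝ) / N

theorem partialDensity_nonneg (A : Set ℕ) (N : ℕ) : 0 ≤ partialDensity A N := by
  unfold partialDensity
  positivity

theorem partialDensity_le_one (A : Set ℕ) (N : ℕ) : partialDensity A N ≤ 1 := by
  refine div_le_one_of_le₀ ?_ (Nat.cast_nonneg N)
  exact_mod_cast (Finset.card_filter_le _ _).trans (Nat.card_Icc 1 N).le

theorem upperDensity_le_of_card_le {A : Set ℕ} {a b : ℝ}
    (hA : ∀ N : ℕ, (((Finset.Icc 1 N).filter (· ∈ A)).card : ℝ) ≤ a * N + b) :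
    upperDensity A ≤ a := by
  have hlim : Tendsto (fun N : ℕ => a + b / N) atTop (nhds a) := by
    simpa using tendsto_const_nhds.add (tendsto_const_div_atTop_nhds_zero_nat b)
  have hle : partialDensity A ≤ᶠ[atTop] fun N : ℕ => a + b / N := by
    filter_upwards [eventually_gt_atTop 0] with N hN
    rw [partialDensity, div_le_iff₀ (by positivity), add_mul, div_mul_cancel₀ _ (by positivity)]
    exact hA N
  calc upperDensity A ≤ limsup (fun N : ℕ => a + b / N) atTop :=
        limsup_le_limsup hle (isCoboundedUnder_le_of_le atTop (partialDensity_nonneg A))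
          hlim.isBoundedUnder_le
    _ = a := hlim.limsup_eq

theorem lowerDensity_pos_of_card_le {A A' : Set ℕ} (hA : 0 < lowerDensity A) (c : ℕ)
    (hAA' : ∀ N : ℕ, ((Finset.Icc 1 N).filter (· ∈ A)).card ≤
      c * ((Finset.Icc 1 N).filter (· ∈ A')).card + c) :
    0 < lowerDensity A' := by
  set d := lowerDensity A
  have hA_ev : ∀ᶠ N in atTop, d / 2 < partialDensity A N :=
    eventually_lt_of_lt_liminf (half_lt_self hA) (isBoundedUnder_of ⟨0, partialDensity_nonneg A⟩)
  have hc_ev : ∀ᶠ N : ℕ in atTop, (c : ℝ) / N < d / 4 :=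
    (tendsto_const_div_atTop_nhds_zero_nat (c : ℝ)).eventually (gt_mem_nhds (by positivity))
  have hA'_ev : ∀ᶠ N in atTop, d / (4 * (c + 1)) ≤ partialDensity A' N := by
    filter_upwards [hA_ev, hc_ev, eventually_gt_atTop 0] with N hdA hcN hN
    have hN' : (0 : ℝ) < N := by exact_mod_cast hN
    have hcount : partialDensity A N ≤ c * partialDensity A' N + c / N := by
      rw [partialDensity, partialDensity, mul_div_assoc', ← add_div,
        div_le_div_iff_of_pos_right hN']
      exact_mod_cast hAA' N
    have := partialDensity_nonneg A' N
    rw [div_le_iff₀ (by positivity)]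
    nlinarith
  exact (by positivity : 0 < d / (4 * (c + 1))).trans_le
    (le_liminf_of_le (isCoboundedUnder_ge_of_le atTop (partialDensity_le_one A')) hA'_ev)

theorem lowerDensity_diff_union_everyNth_pos {B : Set ℕ} (hB : 0 < lowerDensity B) {q : ℕ}
    (hq : 0 < q) (T : Set ℕ) : 0 < lowerDensity (B \ T ∪ everyNth q T) := by
  -- an opaque `B'` keeps `Nat.count (· ∈ B')` on the classical instance used by `lowerDensity`
  generalize hB' : B \ T ∪ everyNth q T = B'
  refine lowerDensity_pos_of_card_le hB (q + 1) fun N => ?_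
  have hcount := count_le_mul_count_of_diff_subset_of_everyNth_subset T hq
    (hB' ▸ subset_union_left) (hB' ▸ subset_union_right) (N + 1)
  calc _ ≤ Nat.count (· ∈ B) (N + 1) := card_filter_Icc_le_count_succ B N
    _ ≤ (q + 1) * Nat.count (· ∈ B') (N + 1) := hcount
    _ ≤ (q + 1) * (((Finset.Icc 1 N).filter (· ∈ B')).card + 1) :=
      Nat.mul_le_mul_left _ (count_succ_le_card_filter_Icc_add_one B' N)
    _ = _ := by ring

theorem upperDensity_everyNth_le {q : ℕ} (hq : 0 < q) (S : Set ℕ) :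
    upperDensity (everyNth q S) ≤ 1 / q := by
  refine upperDensity_le_of_card_le (b := 2) fun N => ?_
  have hcard : (q * ((Finset.Icc 1 N).filter (· ∈ everyNth q S)).card : ℝ) ≤ N + 1 + q := by
    exact_mod_cast (Nat.mul_le_mul_left q (card_filter_Icc_le_count_succ _ N)).trans
      (mul_count_everyNth_le S hq (N + 1))
  have hq' : (1 : ℝ) ≤ q := by exact_mod_cast hq
  rw [one_div_mul_eq_div, div_add' _ _ _ (by positivity), le_div_iff₀ (by positivity)]
  linarith

theorem stmt0 (B : Set ℕ) (hB : 0 < lowerDensity B) (h : ℕ → ℝ) (hh : StrictMono h)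
    (δ : ℝ) (hδ : 0 < δ) :
    ∃ B' ⊆ B, 0 < lowerDensity B' ∧
      upperDensity {n : ℕ | ∃ b ∈ B', h b = (n : ℝ)} < δ := by
  obtain ⟨q, hq⟩ := exists_nat_gt (1 / δ)
  have hq0 : 0 < q := by exact_mod_cast (one_div_pos.2 hδ).trans hq
  set T := B ∩ h ⁻¹' range ((↑) : ℕ → ℝ)
  refine ⟨B \ T ∪ everyNth q T, union_subset sdiff_subset fun b hb => hb.1.1,
    lowerDensity_diff_union_everyNth_pos hB hq0 T, ?_⟩
  rw [natValues_union_everyNth_eq hh (fun b hb hbT => hb.2 ⟨hb.1, hbT⟩) inter_subset_right]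
  exact (upperDensity_everyNth_le hq0 _).trans_lt ((one_div_lt (by positivity) hδ).2 hq)
end

section
/- Let A ⊆ ℕ have positive lower density and let f : ℕ → ℝ be injective. Then there exists A' ⊆ A with positive lower density such that for all n, m ∈ A', if n ≠ m then n ≠ f(m). -/
open Filter Set
open scoped Classical

/-- Greedy independent set: `n` is good if `n ∈ A` and it doesn't conflict with any
smaller good element. -/
def good (A : Set ℕ) (f : ℕ → ℝ) : ℕ → Prop :=
  fun n => n ∈ A ∧ ∀ m, m < n → good A f m → (n : ℝ) ≠ f m ∧ (m : ℝ) ≠ f n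
termination_by n => n

lemma good_iff (A : Set ℕ) (f : ℕ → ℝ) (n : ℕ) :
    good A f n ↔ n ∈ A ∧ ∀ m, m < n → good A f m → (n : ℝ) ≠ f m ∧ (m : ℝ) ≠ f n := by
  rw [good]

lemma count_le (A : Set ℕ) (f : ℕ → ℝ) (hf : Function.Injective f) (N : ℕ) :
    ((Finset.Icc 1 N).filter (fun n => n ∈ A)).card ≤
      3 * ((Finset.Icc 1 N).filter (fun n => good A f n)).card + 3 := by
  classical
  set S := (Finset.Icc 1 N).filter (fun n => n ∈ A) with hS
  set T := (Finset.Icc 0 N).filter (fun n => good A f n) with hT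
  set T' := (Finset.Icc 1 N).filter (fun n => good A f n) with hT'
  have ex : ∀ n, n ∈ A → ¬ good A f n →
      ∃ m, m < n ∧ good A f m ∧ ((n : ℝ) = f m ∨ (m : ℝ) = f n) := by
    intro n hn hng
    rw [good_iff] at hng
    push_neg at hng
    obtain ⟨m, hm1, hm2, hm3⟩ := hng hn
    exact ⟨m, hm1, hm2, by tauto⟩
  -- witness function
  let w : ℕ → ℕ := fun n =>
    if h : n ∈ A ∧ ¬ good A f n then (ex n h.1 h.2).choose else 0
  have hbad : (S.filter (fun n => ¬ good A f n)).card ≤ 2 * T.card := by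
    apply Finset.card_le_mul_card_image_of_maps_to (f := w)
    · intro n hn
      simp only [Finset.mem_filter, hS] at hn
      obtain ⟨⟨hn1, hn2⟩, hn3⟩ := hn
      have h : n ∈ A ∧ ¬ good A f n := ⟨hn2, hn3⟩
      have spec := (ex n h.1 h.2).choose_spec
      simp only [w, dif_pos h, hT, Finset.mem_filter, Finset.mem_Icc]
      exact ⟨⟨Nat.zero_le _, le_trans spec.1.le (Finset.mem_Icc.mp hn1).2⟩, spec.2.1⟩
    · intro m _
      have hsub : (S.filter (fun n => ¬ good A f n)).filter (fun n => w n = m) ⊆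
          (Finset.Icc 1 N).filter (fun k : ℕ => (k : ℝ) = f m ∨ (m : ℝ) = f k) := by
        intro n hn
        simp only [Finset.mem_filter, hS] at hn
        obtain ⟨⟨⟨hn1, hn2⟩, hn3⟩, hn4⟩ := hn
        have h : n ∈ A ∧ ¬ good A f n := ⟨hn2, hn3⟩
        have spec := (ex n h.1 h.2).choose_spec
        have hw : w n = (ex n h.1 h.2).choose := dif_pos h
        rw [hw] at hn4
        simp only [Finset.mem_filter]
        refine ⟨hn1, ?_⟩
        rw [← hn4]
        exact spec.2.2
      calc ((S.filter (fun n => ¬ good A f n)).filter (fun n => w n = m)).card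
          ≤ ((Finset.Icc 1 N).filter (fun k : ℕ => (k : ℝ) = f m ∨ (m : ℝ) = f k)).card :=
            Finset.card_le_card hsub
        _ ≤ _ := by
            rw [Finset.filter_or]
            refine le_trans (Finset.card_union_le _ _) ?_
            have h1 : ((Finset.Icc 1 N).filter (fun k : ℕ => (k : ℝ) = f m)).card ≤ 1 := by
              apply Finset.card_le_one.mpr
              intro a ha b hb
              simp only [Finset.mem_filter] at ha hb
              exact_mod_cast ha.2.trans hb.2.symm
            have h2 : ((Finset.Icc 1 N).filter (fun k : ℕ => (m : ℝ) = f k)).card ≤ 1 := by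
              apply Finset.card_le_one.mpr
              intro a ha b hb
              simp only [Finset.mem_filter] at ha hb
              exact hf (ha.2.symm.trans hb.2)
            omega
  have hgoodpart : (S.filter (fun n => good A f n)).card ≤ T.card := by
    apply Finset.card_le_card
    intro n hn
    simp only [Finset.mem_filter, hS, hT, Finset.mem_Icc] at hn ⊢
    exact ⟨⟨Nat.zero_le _, hn.1.1.2⟩, hn.2⟩
  have hTT' : T.card ≤ T'.card + 1 := by
    have : T ⊆ insert 0 T' := by
      intro n hn
      simp only [Finset.mem_filter, hT, hT', Finset.mem_Icc, Finset.mem_insert] at hn ⊢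
      rcases Nat.eq_zero_or_pos n with h | h
      · exact Or.inl h
      · exact Or.inr ⟨⟨h, hn.1.2⟩, hn.2⟩
    calc T.card ≤ (insert 0 T').card := Finset.card_le_card this
      _ ≤ T'.card + 1 := Finset.card_insert_le _ _
  have hsplit : (S.filter (fun n => good A f n)).card
      + (S.filter (fun n => ¬ good A f n)).card = S.card :=
    Finset.card_filter_add_card_filter_not (p := fun n => good A f n)
  omega

theorem stmt1 (A : Set ℕ) (hA : 0 < lowerDensity A) (f : ℕ → ℝ)
    (hf : Function.Injective f) :
    ∃ A' ⊆ A, 0 < lowerDensity A' ∧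
      ∀ n ∈ A', ∀ m ∈ A', n ≠ m → (n : ℝ) ≠ f m := by
  refine ⟨{n | good A f n}, fun n hn => ((good_iff A f n).mp hn).1, ?_, ?_⟩
  · -- positive lower density
    set u : ℕ → ℝ := fun N => (((Finset.Icc 1 N).filter (fun n => n ∈ A)).card : ℝ) / N
      with hu
    set v : ℕ → ℝ := fun N =>
      (((Finset.Icc 1 N).filter (fun n => n ∈ {n | good A f n})).card : ℝ) / N with hv
    have hu0 : ∀ N, 0 ≤ u N := fun N => by positivity
    set d := lowerDensity A with hd
    have hdu : liminf u atTop = d := rfl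
    have hboundu : IsBoundedUnder (· ≥ ·) atTop u :=
      ⟨0, eventually_map.2 (Eventually.of_forall hu0)⟩
    have hev : ∀ᶠ N in atTop, d / 2 < u N :=
      eventually_lt_of_lt_liminf (by rw [hdu]; exact half_lt_self hA) hboundu
    have hNlarge : ∀ᶠ N : ℕ in atTop, (12 : ℝ) / d < N := by
      filter_upwards [eventually_gt_atTop (⌈(12 : ℝ) / d⌉₊)] with N hN
      calc (12 : ℝ) / d ≤ ⌈(12 : ℝ) / d⌉₊ := Nat.le_ceil _
        _ < N := by exact_mod_cast hN
    have key : ∀ᶠ N in atTop, d / 12 ≤ v N := by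
      filter_upwards [hev, hNlarge, eventually_ge_atTop 1] with N h1 h2 h3
      have hNpos : (0 : ℝ) < N := by exact_mod_cast h3
      have hcount := count_le A f hf N
      have hvv : v N = (((Finset.Icc 1 N).filter (fun n => good A f n)).card : ℝ) / N := by
        simp only [hv, Set.mem_setOf_eq]
      have hc : (((Finset.Icc 1 N).filter (fun n => n ∈ A)).card : ℝ) ≤
          3 * (((Finset.Icc 1 N).filter (fun n => good A f n)).card : ℝ) + 3 := by
        exact_mod_cast hcount
      have huv : u N ≤ 3 * v N + 3 / N := by
        rw [hu, hvv]
        calc (((Finset.Icc 1 N).filter (fun n => n ∈ A)).card : ℝ) / N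
            ≤ (3 * (((Finset.Icc 1 N).filter (fun n => good A f n)).card : ℝ) + 3) / N := by
              gcongr
          _ = 3 * ((((Finset.Icc 1 N).filter (fun n => good A f n)).card : ℝ) / N) + 3 / N := by
              rw [add_div, mul_div_assoc]
      have h2' : 12 < (N : ℝ) * d := by rwa [div_lt_iff₀ hA] at h2
      have h3N : 3 / (N : ℝ) < d / 4 := by
        rw [div_lt_div_iff₀ hNpos (by norm_num : (0:ℝ) < 4)]
        linarith
      linarith
    have hv1 : ∀ N, v N ≤ 1 := by
      intro N
      rcases Nat.eq_zero_or_pos N with h | h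
      · subst h; simp [hv]
      · have hNpos : (0 : ℝ) < N := by exact_mod_cast h
        rw [hv, div_le_one hNpos]
        have : ((Finset.Icc 1 N).filter (fun n => n ∈ {n | good A f n})).card ≤ N := by
          refine le_trans (Finset.card_filter_le _ _) ?_
          simp [Nat.card_Icc]
        exact_mod_cast this
    have hcobdd : IsCoboundedUnder (· ≥ ·) atTop v :=
      IsBoundedUnder.isCoboundedUnder_ge ⟨1, eventually_map.2 (Eventually.of_forall hv1)⟩
    have hfin : d / 12 ≤ lowerDensity {n | good A f n} := le_liminf_of_le hcobdd key
    have : (0:ℝ) < d / 12 := by positivity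
    linarith
  · intro n hn m hm hnm
    simp only [Set.mem_setOf_eq] at hn hm
    rcases lt_or_gt_of_ne hnm with h | h
    · exact (((good_iff A f m).mp hm).2 n h hn).2
    · exact (((good_iff A f n).mp hn).2 m h hm).1
end

section
/- Let F : closed right half-plane → ℂ be a bounded measurable function satisfying |F(it)| ≤ C/(1+t²) for all t ∈ ℝ, and let τ > 0. Define ε(a) for a > 0 by ε(a)² = ∫_{−∞}^{−a/2} M² dt/(π(1+t²)) + δ(a)², where M = sup_t ∑_{n∈ℕ} |F(i(t+nτ))| and δ(a) = ∑_{n∈ℕ} C/(1 + (nτ + a/2)²). Then ε(a) → 0 as a → ∞, and for every finite A ⊆ ℕ and every a > 0, the L²(m_inv) norm of t ↦ ∑_{n∈A} F(i t + i n τ + i a) is at most ε(a). -/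
open Filter MeasureTheory

lemma base_sum : Summable (fun n : ℕ => 1 / ((n:ℝ)+1)^2) := by
  have h := Real.summable_one_div_nat_pow.mpr (one_lt_two (α := ℕ))
  exact_mod_cast (summable_nat_add_iff 1).mpr h

lemma sumA {C τ : ℝ} (hC : 0 ≤ C) (hτ : 0 < τ) {x : ℝ} (hx : 0 ≤ x) :
    Summable (fun n : ℕ => C / (1 + ((n:ℝ) * τ + x) ^ 2)) := by
  apply (summable_nat_add_iff 1).mp
  have hg : Summable (fun n : ℕ => (C / τ ^ 2) * (1 / ((n:ℝ)+1)^2)) := base_sum.mul_left _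
  refine hg.of_nonneg_of_le (fun n => by positivity) (fun n => ?_)
  have key : ((n:ℝ)+1)^2 * τ^2 ≤ 1 + (((n+1 : ℕ):ℝ) * τ + x) ^ 2 := by
    push_cast
    nlinarith [mul_pos (by positivity : (0:ℝ) < (n:ℝ)+1) hτ, sq_nonneg x,
      mul_nonneg (mul_nonneg (by positivity : (0:ℝ) ≤ (n:ℝ)+1) hτ.le) hx]
  calc C / (1 + (((n+1 : ℕ):ℝ) * τ + x) ^ 2) ≤ C / (((n:ℝ)+1)^2 * τ^2) :=
        div_le_div_of_nonneg_left hC (by positivity) key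
    _ = C / τ^2 * (1/((n:ℝ)+1)^2) := by rw [div_mul_div_comm, mul_one, mul_comm (τ^2)]

/-- general summability -/
lemma sumB {C τ : ℝ} (hC : 0 ≤ C) (hτ : 0 < τ) (s : ℝ) :
    Summable (fun n : ℕ => C / (1 + (s + (n:ℝ) * τ) ^ 2)) := by
  set N : ℕ := ⌈-s/τ⌉₊ with hN
  have hx : 0 ≤ s + (N:ℝ) * τ := by
    have := Nat.le_ceil (-s/τ)
    rw [div_le_iff₀ hτ] at this
    linarith
  apply (summable_nat_add_iff N).mp
  apply (sumA hC hτ hx).congr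
  intro n; push_cast; ring_nf

lemma tsum_bound {C τ : ℝ} (hC : 0 ≤ C) (hτ : 0 < τ) (s : ℝ) :
    ∑' n : ℕ, C / (1 + (s + (n:ℝ) * τ) ^ 2) ≤ 2 * ∑' n : ℕ, C / (1 + ((n:ℝ) * τ) ^ 2) := by
  have hT : Summable (fun n : ℕ => C / (1 + ((n:ℝ) * τ) ^ 2)) := by
    simpa using sumA hC hτ (le_refl (0:ℝ))
  set f : ℕ → ℝ := fun n => C / (1 + (s + (n:ℝ) * τ) ^ 2) with hf
  set N : ℕ := ⌈-s/τ⌉₊ with hN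
  have hx : 0 ≤ s + (N:ℝ) * τ := by
    have := Nat.le_ceil (-s/τ)
    rw [div_le_iff₀ hτ] at this
    linarith
  rw [← Summable.sum_add_tsum_nat_add N (sumB hC hτ s)]
  have htail : ∑' n : ℕ, f (n + N) ≤ ∑' n : ℕ, C / (1 + ((n:ℝ) * τ) ^ 2) := by
    refine Summable.tsum_le_tsum (fun n => ?_) ((summable_nat_add_iff N).mpr (sumB hC hτ s)) hT
    have hnτ : 0 ≤ (n:ℝ) * τ := by positivity
    have key : 1 + ((n:ℝ) * τ) ^ 2 ≤ 1 + (s + ((n + N : ℕ):ℝ) * τ) ^ 2 := by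
      push_cast
      nlinarith [hx, hnτ, mul_nonneg hnτ hx]
    simpa [hf] using div_le_div_of_nonneg_left hC (by positivity) key
  have hhead : ∑ n ∈ Finset.range N, f n ≤ ∑' n : ℕ, C / (1 + ((n:ℝ) * τ) ^ 2) := by
    have hrefl : ∑ n ∈ Finset.range N, f n = ∑ j ∈ Finset.range N, f (N - 1 - j) :=
      (Finset.sum_range_reflect f N).symm
    rw [hrefl]
    refine le_trans (Finset.sum_le_sum (fun j hj => ?_))
      (Summable.sum_le_tsum _ (fun n _ => by positivity) hT)
    have hjN : j < N := Finset.mem_range.mp hj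
    have hN1 : 1 ≤ N := Nat.one_le_iff_ne_zero.mpr (by omega)
    have hlt : ((N - 1 : ℕ):ℝ) < -s/τ := by
      rw [← Nat.lt_ceil]; omega
    have hcast1 : ((N - 1 : ℕ):ℝ) = (N:ℝ) - 1 := by
      push_cast [Nat.cast_sub hN1]; ring
    have hxτ : s + (N:ℝ) * τ < τ := by
      rw [hcast1] at hlt
      rw [lt_div_iff₀ hτ] at hlt
      nlinarith
    have hcast2 : ((N - 1 - j : ℕ):ℝ) = (N:ℝ) - 1 - j := by
      have : (N - 1 - j : ℕ) + (j + 1) = N := by omega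
      have := congrArg (fun k : ℕ => (k:ℝ)) this
      push_cast at this
      linarith
    have hjτ : 0 ≤ (j:ℝ) * τ := by positivity
    have key : 1 + ((j:ℝ) * τ) ^ 2 ≤ 1 + (s + ((N - 1 - j : ℕ):ℝ) * τ) ^ 2 := by
      rw [hcast2]
      nlinarith [hx, hxτ, hjτ, hτ, mul_nonneg hjτ hx, mul_nonneg hjτ hτ.le]
    simpa [hf] using div_le_div_of_nonneg_left hC (by positivity) key
  calc ∑ n ∈ Finset.range N, f n + ∑' n : ℕ, f (n + N)
      ≤ ∑' n : ℕ, C / (1 + ((n:ℝ) * τ) ^ 2) + ∑' n : ℕ, C / (1 + ((n:ℝ) * τ) ^ 2) :=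
        add_le_add hhead htail
    _ = 2 * ∑' n : ℕ, C / (1 + ((n:ℝ) * τ) ^ 2) := by ring

theorem stmt9 (F : ℂ → ℂ) (hmeas : Measurable F) (K : ℝ)
    (hbd : ∀ w : ℂ, 0 ≤ w.re → ‖F w‖ ≤ K)
    (C : ℝ) (hC : 0 < C) (hF : ∀ t : ℝ, ‖F (Complex.I * t)‖ ≤ C / (1 + t ^ 2))
    (τ : ℝ) (hτ : 0 < τ)
    (M : ℝ) (hM : M = ⨆ t : ℝ, ∑' n : ℕ, ‖F (Complex.I * (t + n * τ))‖)
    (dlt : ℝ → ℝ) (hdlt : ∀ a : ℝ, dlt a = ∑' n : ℕ, C / (1 + (n * τ + a / 2) ^ 2))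
    (e : ℝ → ℝ)
    (he : ∀ a : ℝ, e a = Real.sqrt
      ((∫ t in Set.Iio (-a / 2), M ^ 2 / (Real.pi * (1 + t ^ 2))) + dlt a ^ 2)) :
    Tendsto e atTop (nhds 0) ∧
    ∀ A : Finset ℕ, ∀ a : ℝ, 0 < a →
      Real.sqrt (∫ t : ℝ,
        ‖∑ n ∈ A, F (Complex.I * t + Complex.I * n * τ + Complex.I * a)‖ ^ 2 /
          (Real.pi * (1 + t ^ 2))) ≤ e a := by
  have hC0 : (0:ℝ) ≤ C := hC.le
  have hpi : (0:ℝ) < Real.pi := Real.pi_pos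
  -- summability of the norm series
  have hgs : ∀ s : ℝ, Summable (fun n : ℕ => ‖F (Complex.I * ((s + n * τ : ℝ) : ℂ))‖) := by
    intro s
    exact (sumB hC0 hτ s).of_nonneg_of_le (fun n => norm_nonneg _) (fun n => hF _)
  -- rewriting the sup argument
  have hre : ∀ t : ℝ, (fun n : ℕ => ‖F (Complex.I * ((t:ℂ) + (n:ℂ) * (τ:ℂ)))‖)
      = fun n : ℕ => ‖F (Complex.I * ((t + n * τ : ℝ) : ℂ))‖ := by
    intro t; funext n; norm_cast
  -- uniform bound and sup bound
  have hBdd : BddAbove (Set.range fun t : ℝ => ∑' n : ℕ, ‖F (Complex.I * ((t:ℂ) + (n:ℂ) * (τ:ℂ)))‖) := by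
    refine ⟨2 * ∑' n : ℕ, C / (1 + ((n:ℝ) * τ) ^ 2), ?_⟩
    rintro _ ⟨t, rfl⟩
    show (∑' n : ℕ, ‖F (Complex.I * ((t:ℂ) + (n:ℂ) * (τ:ℂ)))‖) ≤ _
    rw [hre t]
    calc ∑' n : ℕ, ‖F (Complex.I * ((t + n * τ : ℝ) : ℂ))‖
        ≤ ∑' n : ℕ, C / (1 + (t + (n:ℝ) * τ) ^ 2) :=
          Summable.tsum_le_tsum (fun n => hF _) (hgs t) (sumB hC0 hτ t)
      _ ≤ 2 * ∑' n : ℕ, C / (1 + ((n:ℝ) * τ) ^ 2) := tsum_bound hC0 hτ t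
  have hMle : ∀ s : ℝ, ∑' n : ℕ, ‖F (Complex.I * ((s + n * τ : ℝ) : ℂ))‖ ≤ M := by
    intro s
    rw [hM, ← hre s]
    exact le_ciSup hBdd s
  have hM0 : (0:ℝ) ≤ M :=
    le_trans (tsum_nonneg (fun n => norm_nonneg _)) (hMle 0)
  have hdlt0 : ∀ a : ℝ, 0 ≤ dlt a := by
    intro a; rw [hdlt]; exact tsum_nonneg (fun n => by positivity)
  -- integrability of the weight
  have hweight : ∀ r : ℝ, Integrable (fun t : ℝ => r / (Real.pi * (1 + t ^ 2))) := by
    intro r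
    have h1 : (fun t : ℝ => r / (Real.pi * (1 + t ^ 2)))
        = fun t : ℝ => (r / Real.pi) * (1 + t ^ 2)⁻¹ := by
      funext t
      have ht : (1:ℝ) + t ^ 2 ≠ 0 := by positivity
      field_simp
    rw [h1]
    exact integrable_inv_one_add_sq.const_mul _
  have hweight_int : ∀ r : ℝ, (∫ t : ℝ, r / (Real.pi * (1 + t ^ 2))) = r := by
    intro r
    have h1 : (fun t : ℝ => r / (Real.pi * (1 + t ^ 2)))
        = fun t : ℝ => (r / Real.pi) * (1 + t ^ 2)⁻¹ := by
      funext t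
      have ht : (1:ℝ) + t ^ 2 ≠ 0 := by positivity
      field_simp
    rw [h1, MeasureTheory.integral_const_mul, integral_univ_inv_one_add_sq,
      div_mul_cancel₀ _ Real.pi_ne_zero]
  -- value of the tail integral
  have hIio : ∀ a : ℝ, (∫ t in Set.Iio (-a / 2), M ^ 2 / (Real.pi * (1 + t ^ 2)))
      = (M ^ 2 / Real.pi) * (Real.arctan (-a / 2) + Real.pi / 2) := by
    intro a
    have h1 : (fun t : ℝ => M ^ 2 / (Real.pi * (1 + t ^ 2)))
        = fun t : ℝ => (M ^ 2 / Real.pi) * (1 + t ^ 2)⁻¹ := by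
      funext t
      have ht : (1:ℝ) + t ^ 2 ≠ 0 := by positivity
      field_simp
    rw [h1, MeasureTheory.integral_const_mul, ← integral_Iic_eq_integral_Iio,
      integral_Iic_inv_one_add_sq]
  constructor
  · -- Tendsto e atTop (nhds 0)
    have hIioT : Tendsto (fun a : ℝ => ∫ t in Set.Iio (-a / 2), M ^ 2 / (Real.pi * (1 + t ^ 2)))
        atTop (nhds 0) := by
      have hb : Tendsto (fun a : ℝ => -a / 2) atTop atBot := by
        apply Tendsto.atBot_div_const (by norm_num : (0:ℝ) < 2)
        exact tendsto_neg_atBot_iff.mpr tendsto_id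
      have harct : Tendsto (fun a : ℝ => Real.arctan (-a / 2)) atTop (nhds (-(Real.pi/2))) :=
        (Real.tendsto_arctan_atBot.mono_right nhdsWithin_le_nhds).comp hb
      have := ((harct.add_const (Real.pi / 2)).const_mul (M ^ 2 / Real.pi))
      simp only [neg_add_cancel, mul_zero] at this
      refine Tendsto.congr (fun a => (hIio a).symm) this
    have hdltT : Tendsto dlt atTop (nhds 0) := by
      have h0 : Tendsto (fun a : ℝ => ∑' n : ℕ, C / (1 + ((n:ℝ) * τ + a / 2) ^ 2))
          atTop (nhds (∑' _ : ℕ, (0:ℝ))) := by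
        apply tendsto_tsum_of_dominated_convergence
          (bound := fun n : ℕ => C / (1 + ((n:ℝ) * τ) ^ 2))
        · simpa using sumA hC0 hτ (le_refl (0:ℝ))
        · intro n
          apply Tendsto.div_atTop tendsto_const_nhds
          have h1 : Tendsto (fun a : ℝ => (n:ℝ) * τ + a / 2) atTop atTop :=
            tendsto_atTop_add_const_left _ _ (tendsto_id.atTop_div_const (by norm_num))
          have h2 : Tendsto (fun a : ℝ => ((n:ℝ) * τ + a / 2) ^ 2) atTop atTop :=
            (tendsto_pow_atTop (by norm_num : 2 ≠ 0)).comp h1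
          exact tendsto_atTop_add_const_left _ _ h2
        · filter_upwards [eventually_ge_atTop (0:ℝ)] with a ha n
          have hnτ : 0 ≤ (n:ℝ) * τ := by positivity
          have key : 1 + ((n:ℝ) * τ) ^ 2 ≤ 1 + ((n:ℝ) * τ + a / 2) ^ 2 := by nlinarith
          have hnn : 0 ≤ C / (1 + ((n:ℝ) * τ + a / 2) ^ 2) := by positivity
          rw [Real.norm_eq_abs, abs_of_nonneg hnn]
          exact div_le_div_of_nonneg_left hC0 (by positivity) key
      simp only [tsum_zero] at h0
      exact Tendsto.congr (fun a => (hdlt a).symm) h0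
    have hsumT : Tendsto (fun a : ℝ =>
        (∫ t in Set.Iio (-a / 2), M ^ 2 / (Real.pi * (1 + t ^ 2))) + dlt a ^ 2)
        atTop (nhds 0) := by
      have := hIioT.add ((hdltT.pow 2))
      simpa using this
    have := (Real.continuous_sqrt.tendsto 0).comp hsumT
    simp only [Real.sqrt_zero] at this
    exact Tendsto.congr (fun a => (he a).symm) this
  · -- main estimate
    intro A a ha
    set G : ℝ → ℝ := fun t =>
      ‖∑ n ∈ A, F (Complex.I * (t:ℂ) + Complex.I * (n:ℂ) * (τ:ℂ) + Complex.I * (a:ℂ))‖ ^ 2 /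
        (Real.pi * (1 + t ^ 2)) with hG
    set S : ℝ → ℝ := fun t =>
      ‖∑ n ∈ A, F (Complex.I * (t:ℂ) + Complex.I * (n:ℂ) * (τ:ℂ) + Complex.I * (a:ℂ))‖ with hS
    have harg : ∀ t : ℝ, ∀ n : ℕ,
        Complex.I * (t:ℂ) + Complex.I * (n:ℂ) * (τ:ℂ) + Complex.I * (a:ℂ)
          = Complex.I * (((t + a) + n * τ : ℝ) : ℂ) := by
      intro t n; push_cast; ring
    have hS_sum : ∀ t : ℝ, S t ≤ ∑ n ∈ A, ‖F (Complex.I * (((t + a) + n * τ : ℝ) : ℂ))‖ := by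
      intro t
      rw [hS]
      simp only [harg t]
      exact norm_sum_le _ _
    have hb1 : ∀ t : ℝ, S t ≤ M := by
      intro t
      refine le_trans (hS_sum t) (le_trans ?_ (hMle (t + a)))
      exact Summable.sum_le_tsum A (fun n _ => norm_nonneg _) (hgs (t + a))
    have hb2 : ∀ t : ℝ, -a / 2 ≤ t → S t ≤ dlt a := by
      intro t ht
      refine le_trans (hS_sum t) ?_
      rw [hdlt]
      refine le_trans (Finset.sum_le_sum (fun n _ => ?_))
        (Summable.sum_le_tsum A (fun n _ => by positivity) (sumA hC0 hτ (by linarith : (0:ℝ) ≤ a / 2)))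
      refine le_trans (hF ((t + a) + n * τ)) ?_
      have hnτ : 0 ≤ (n:ℝ) * τ := by positivity
      have key : 1 + ((n:ℝ) * τ + a / 2) ^ 2 ≤ 1 + ((t + a) + (n:ℝ) * τ) ^ 2 := by nlinarith
      exact div_le_div_of_nonneg_left hC0 (by positivity) key
    have hS0 : ∀ t : ℝ, 0 ≤ S t := fun t => norm_nonneg _
    -- integrability
    have hSmeas : Measurable S := by
      apply Measurable.norm
      apply Finset.measurable_sum
      intro n _
      exact hmeas.comp (by fun_prop)
    have hGmeas : Measurable G := by
      have hden : Measurable fun t : ℝ => Real.pi * (1 + t ^ 2) := by fun_prop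
      exact ((hSmeas.pow_const 2).div hden)
    have hGint : Integrable G := by
      refine (hweight (M ^ 2)).mono' hGmeas.aestronglyMeasurable ?_
      filter_upwards with t
      have h1 : 0 ≤ G t := by rw [hG]; positivity
      rw [Real.norm_eq_abs, abs_of_nonneg h1]
      have : S t ^ 2 ≤ M ^ 2 := pow_le_pow_left₀ (hS0 t) (hb1 t) 2
      exact div_le_div_of_nonneg_right this (by positivity) |>.trans_eq rfl
    have hup : Integrable fun t : ℝ => dlt a ^ 2 / (Real.pi * (1 + t ^ 2)) := hweight _
    have hupM : Integrable fun t : ℝ => M ^ 2 / (Real.pi * (1 + t ^ 2)) := hweight _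
    have hsplit : (∫ t : ℝ, G t)
        = (∫ t in Set.Iio (-a / 2), G t) + ∫ t in Set.Ici (-a / 2), G t :=
      (intervalIntegral.integral_Iio_add_Ici hGint.integrableOn hGint.integrableOn).symm
    have h1 : (∫ t in Set.Iio (-a / 2), G t)
        ≤ ∫ t in Set.Iio (-a / 2), M ^ 2 / (Real.pi * (1 + t ^ 2)) := by
      refine setIntegral_mono_on hGint.integrableOn hupM.integrableOn measurableSet_Iio ?_
      intro t _
      have : S t ^ 2 ≤ M ^ 2 := pow_le_pow_left₀ (hS0 t) (hb1 t) 2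
      exact div_le_div_of_nonneg_right this (by positivity)
    have h2 : (∫ t in Set.Ici (-a / 2), G t)
        ≤ ∫ t in Set.Ici (-a / 2), dlt a ^ 2 / (Real.pi * (1 + t ^ 2)) := by
      refine setIntegral_mono_on hGint.integrableOn hup.integrableOn measurableSet_Ici ?_
      intro t ht
      have : S t ^ 2 ≤ dlt a ^ 2 := pow_le_pow_left₀ (hS0 t) (hb2 t ht) 2
      exact div_le_div_of_nonneg_right this (by positivity)
    have h3 : (∫ t in Set.Ici (-a / 2), dlt a ^ 2 / (Real.pi * (1 + t ^ 2))) ≤ dlt a ^ 2 := by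
      calc (∫ t in Set.Ici (-a / 2), dlt a ^ 2 / (Real.pi * (1 + t ^ 2)))
          ≤ ∫ t : ℝ, dlt a ^ 2 / (Real.pi * (1 + t ^ 2)) :=
            setIntegral_le_integral (hweight (dlt a ^ 2))
              (Filter.Eventually.of_forall (fun t => by positivity))
        _ = dlt a ^ 2 := hweight_int _
    rw [he a]
    apply Real.sqrt_le_sqrt
    calc (∫ t : ℝ, G t)
        = (∫ t in Set.Iio (-a / 2), G t) + ∫ t in Set.Ici (-a / 2), G t := hsplit
      _ ≤ (∫ t in Set.Iio (-a / 2), M ^ 2 / (Real.pi * (1 + t ^ 2))) + dlt a ^ 2 :=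
          add_le_add h1 (h2.trans h3)
end

section
/- Let (x_n) and (y_n) be sequences in the right half-plane ℂ₀ with x_n = Re(w_n), y_n = Im(w_n), |y_n| → ∞, and x_n/|y_n| → 0 (tangential approach to ∞). Then the pseudo-hyperbolic distance from w_n = x_n + i y_n to the ray I = [1, ∞) ⊆ ℝ ⊆ ℂ₀ tends to 1; equivalently, for all δ > 0 there exists n₀ such that for all n ≥ n₀ and all x ≥ 1, |(w_n − x)/(w_n + x)|² ≥ 1 − δ. -/
/-!
Since `‖z - x‖² = ‖z + x‖² - 4 x Re z` and, for `Re z, x ≥ 0`, `‖z + x‖² ≥ x² + (Im z)² ≥ 2 x |Im z|`,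
one gets `1 - ‖(z - x)/(z + x)‖² ≤ 2 Re z / |Im z|` uniformly in `x ≥ 0`; tangential approach makes
the right-hand side tend to `0`.
-/

open Filter

namespace Complex

lemma sq_norm_sub_ofReal (z : ℂ) (x : ℝ) : ‖z - x‖ ^ 2 = ‖z + x‖ ^ 2 - 4 * z.re * x := by
  simp only [Complex.sq_norm, normSq_apply, sub_re, sub_im, add_re, add_im, ofReal_re, ofReal_im]
  ring

lemma two_mul_mul_abs_im_le_sq_norm_add_ofReal {z : ℂ} {x : ℝ} (hz : 0 ≤ z.re) (hx : 0 ≤ x) :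
    2 * x * |z.im| ≤ ‖z + x‖ ^ 2 := by
  simp only [Complex.sq_norm, normSq_apply, add_re, add_im, ofReal_re, ofReal_im, add_zero]
  nlinarith [sq_abs z.im, sq_nonneg (x - |z.im|), mul_nonneg hz hx]

lemma one_sub_le_sq_norm_sub_ofReal_div_add_ofReal {z : ℂ} {x : ℝ} (hz : 0 ≤ z.re)
    (hx : 0 ≤ x) (him : z.im ≠ 0) :
    1 - 2 * (z.re / |z.im|) ≤ ‖(z - x) / (z + x)‖ ^ 2 := by
  have him_pos : 0 < |z.im| := abs_pos.mpr him
  have hbound := two_mul_mul_abs_im_le_sq_norm_add_ofReal hz hx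
  have hden : 0 < ‖z + x‖ ^ 2 := by
    refine pow_pos (norm_pos_iff.mpr fun h => him ?_) 2
    simpa using congrArg im h
  rw [norm_div, div_pow, sq_norm_sub_ofReal, le_div_iff₀ hden, sub_mul, one_mul,
    sub_le_sub_iff_left, mul_div_assoc', div_mul_eq_mul_div, le_div_iff₀ him_pos]
  nlinarith [mul_le_mul_of_nonneg_left hbound hz]

end Complex

theorem stmt15 (w : ℕ → ℂ) (hre : ∀ n, 0 < (w n).re)
    (him : Tendsto (fun n => |(w n).im|) atTop atTop)
    (htan : Tendsto (fun n => (w n).re / |(w n).im|) atTop (nhds 0)) :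
    ∀ δ : ℝ, 0 < δ → ∃ n₀ : ℕ, ∀ n ≥ n₀, ∀ x : ℝ, 1 ≤ x →
      1 - δ ≤ ‖(w n - (x : ℂ)) / (w n + (x : ℂ))‖ ^ 2 := by
  intro δ hδ
  have hsmall : ∀ᶠ n in atTop, 2 * ((w n).re / |(w n).im|) < δ :=
    (htan.const_mul 2).eventually_lt_const (by simpa using hδ)
  have him_ne : ∀ᶠ n in atTop, (w n).im ≠ 0 :=
    (him.eventually_gt_atTop 0).mono fun n h => abs_pos.mp h
  obtain ⟨n₀, hn₀⟩ := (hsmall.and him_ne).exists_forall_of_atTop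
  refine ⟨n₀, fun n hn x hx => ?_⟩
  obtain ⟨hlt, hne⟩ := hn₀ n hn
  calc 1 - δ ≤ 1 - 2 * ((w n).re / |(w n).im|) := by linarith
    _ ≤ _ := Complex.one_sub_le_sq_norm_sub_ofReal_div_add_ofReal (hre n).le (by linarith) hne
end
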